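/- arXiv:math/0611736 — 6 statements merged into one kernel-verified Lean document; each statement's English description precedes it below -/
import Mathlib

section
/- Let L and S be finite-dimensional nilpotent class-2 Lie algebras over ℚ, both geometrically indecomposable, i.e., neither is geometrically equivalent to a direct product of proper nonzero subalgebras of itself. If L and S are geometrically equivalent (each embeds into a direct power of the other), then L ≅ S. -/
section PiProd

instance Pi.lieRing {I : Type} {L : I → Type} [∀ i, LieRing (L i)] :
    LieRing (∀ i, L i) where
  bracket x y := fun i => ⁅x i, y i⁆
  add_lie x y z := funext fun i => add_lie (x i) (y i) (z i)
  lie_add x y z := funext fun i => lie_add (x i) (y i) (z i)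
  lie_self x := funext fun i => lie_self (x i)
  leibniz_lie x y z := funext fun i => leibniz_lie (x i) (y i) (z i)

instance Pi.lieAlgebra {I : Type} {L : I → Type} [∀ i, LieRing (L i)]
    [∀ i, LieAlgebra ℚ (L i)] : LieAlgebra ℚ (∀ i, L i) where
  lie_smul t x y := funext fun i => lie_smul t (x i) (y i)

instance Prod.lieRing {L M : Type} [LieRing L] [LieRing M] : LieRing (L × M) where
  bracket x y := (⁅x.1, y.1⁆, ⁅x.2, y.2⁆)
  add_lie x y z := by ext <;> exact add_lie _ _ _
  lie_add x y z := by ext <;> exact lie_add _ _ _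
  lie_self x := by ext <;> exact lie_self _
  leibniz_lie x y z := by ext <;> exact leibniz_lie _ _ _

instance Prod.lieAlgebra {L M : Type} [LieRing L] [LieRing M]
    [LieAlgebra ℚ L] [LieAlgebra ℚ M] : LieAlgebra ℚ (L × M) where
  lie_smul t x y := by ext <;> exact lie_smul _ _ _

end PiProd

/-- `L` embeds into some direct power of `S`. -/
def EmbedsInPower (L S : Type) [LieRing L] [LieAlgebra ℚ L] [LieRing S] [LieAlgebra ℚ S] :
    Prop :=
  ∃ (I : Type) (f : L →ₗ⁅ℚ⁆ (I → S)), Function.Injective f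

/-- Geometric equivalence: mutual embeddability into direct powers. -/
def GeomEquiv (L S : Type) [LieRing L] [LieAlgebra ℚ L] [LieRing S] [LieAlgebra ℚ S] :
    Prop :=
  EmbedsInPower L S ∧ EmbedsInPower S L

/-- `L` is geometrically decomposable: geometrically equivalent to a finite direct
product of proper nonzero subalgebras of itself. -/
def GeomDecomposable (L : Type) [LieRing L] [LieAlgebra ℚ L] : Prop :=
  ∃ (k : ℕ) (A : Fin k → LieSubalgebra ℚ L),
    (∀ i, A i ≠ ⊥ ∧ A i ≠ ⊤) ∧ GeomEquiv L (∀ i, A i)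

section Aux

variable {L S : Type} [LieRing L] [LieAlgebra ℚ L] [LieRing S] [LieAlgebra ℚ S]

/-- Coordinate of a Lie hom into a power. -/
def LieHom.coord {J : Type} (g : S →ₗ⁅ℚ⁆ (J → L)) (j : J) : S →ₗ⁅ℚ⁆ L :=
  { toLinearMap := (LinearMap.proj j).comp (g : S →ₗ[ℚ] (J → L))
    map_lie' := by
      intro x y
      show g ⁅x, y⁆ j = ⁅g x j, g y j⁆
      rw [g.map_lie]; rfl }

@[simp] lemma LieHom.coord_apply {J : Type} (g : S →ₗ⁅ℚ⁆ (J → L)) (j : J) (x : S) :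
    LieHom.coord g j x = g x j := rfl

/-- Assemble a family of Lie homs into a Lie hom into the product. -/
def LieHom.pi' {k : Type} {T : k → Type} [∀ i, LieRing (T i)] [∀ i, LieAlgebra ℚ (T i)]
    (f : ∀ i, S →ₗ⁅ℚ⁆ T i) : S →ₗ⁅ℚ⁆ (∀ i, T i) :=
  { toLinearMap := LinearMap.pi fun i => ((f i) : S →ₗ[ℚ] T i)
    map_lie' := by
      intro x y
      funext i
      exact (f i).map_lie x y }

@[simp] lemma LieHom.pi'_apply {k : Type} {T : k → Type} [∀ i, LieRing (T i)]
    [∀ i, LieAlgebra ℚ (T i)] (f : ∀ i, S →ₗ⁅ℚ⁆ T i) (x : S) (i : k) :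
    LieHom.pi' f x i = f i x := rfl

/-- Evaluation at a coordinate of a product of Lie algebras. -/
def LieHom.eval {k : Type} {T : k → Type} [∀ i, LieRing (T i)] [∀ i, LieAlgebra ℚ (T i)]
    (i : k) : (∀ j, T j) →ₗ⁅ℚ⁆ T i :=
  { toLinearMap := LinearMap.proj i
    map_lie' := rfl }

/-- A finitely many coordinates of an injective map into a power already separate points. -/
lemma exists_fin_separating {J : Type} [Module.Finite ℚ S] (g : S →ₗ⁅ℚ⁆ (J → L))
    (hg : Function.Injective g) :
    ∃ (m : ℕ) (t : Fin m → J), ∀ x : S, (∀ i, g x (t i) = 0) → x = 0 := by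
  classical
  set K : J → Submodule ℚ S := fun j => LinearMap.ker ((LieHom.coord g j) : S →ₗ[ℚ] L) with hK
  have hmem : ∀ (j : J) (x : S), x ∈ K j ↔ g x j = 0 := fun j x => Iff.rfl
  set N : Set ℕ := {n | ∃ s : Finset J, Module.finrank ℚ (↥(⨅ j ∈ s, K j)) = n} with hN
  have hNne : N.Nonempty := ⟨_, ∅, rfl⟩
  obtain ⟨n₀, hn₀, hmin⟩ := Nat.lt_wfRel.wf.has_min N hNne
  obtain ⟨s, hs⟩ := hn₀
  have hbot : (⨅ j ∈ s, K j) = ⊥ := by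
    by_contra hne
    obtain ⟨x, hx, hx0⟩ := Submodule.ne_bot_iff _ |>.1 hne
    have hgx : g x ≠ 0 := by
      intro h0
      exact hx0 (hg (by rw [h0, map_zero]))
    obtain ⟨j, hj⟩ : ∃ j, g x j ≠ 0 := by
      by_contra hc
      push_neg at hc
      exact hgx (funext hc)
    have hlt : (⨅ j' ∈ insert j s, K j') < ⨅ j' ∈ s, K j' := by
      rw [Finset.iInf_insert]
      refine lt_of_le_of_ne inf_le_right ?_
      intro heq
      have : x ∈ K j ⊓ ⨅ j ∈ s, K j := heq.symm ▸ hx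
      exact hj ((hmem j x).1 this.1)
    have hflt : Module.finrank ℚ (↥(⨅ j' ∈ insert j s, K j')) < n₀ := by
      rw [← hs]
      exact Submodule.finrank_lt_finrank_of_lt hlt
    exact hmin _ ⟨_, rfl⟩ hflt
  refine ⟨s.card, fun i => (s.equivFin.symm i : J), fun x hx => ?_⟩
  have : x ∈ ⨅ j ∈ s, K j := by
    rw [Submodule.mem_iInf]
    intro j
    rw [Submodule.mem_iInf]
    intro hj
    rw [hmem]
    have := hx (s.equivFin ⟨j, hj⟩)
    simpa using this
  rw [hbot] at this
  simpa using this

/-- The key step: indecomposability forces a surjection. -/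
lemma exists_surjective_lieHom [Module.Finite ℚ S]
    (hLind : ¬ GeomDecomposable L) (h1 : EmbedsInPower L S) (h2 : EmbedsInPower S L) :
    ∃ f : S →ₗ⁅ℚ⁆ L, Function.Surjective f := by
  classical
  obtain ⟨I, fI, hfI⟩ := h1
  obtain ⟨J, g, hg⟩ := h2
  obtain ⟨m, t, ht⟩ := exists_fin_separating g hg
  set c : Fin m → (S →ₗ⁅ℚ⁆ L) := fun i => LieHom.coord g (t i) with hc
  by_contra hns
  push_neg at hns
  set J1 : Finset (Fin m) := Finset.univ.filter (fun i => (c i).range ≠ ⊥) with hJ1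
  set k := J1.card with hk
  set e := J1.equivFin with he
  set A : Fin k → LieSubalgebra ℚ L := fun i => (c (e.symm i : Fin m)).range with hA
  -- the canonical map S → ∏ A i and its injectivity
  set F : S →ₗ⁅ℚ⁆ (∀ i, A i) := LieHom.pi' (fun i => (c (e.symm i : Fin m)).rangeRestrict) with hF
  have hFzero : ∀ x : S, F x = 0 → x = 0 := by
    intro x hx
    apply ht
    intro i
    show c i x = 0
    by_cases hi : (c i).range = ⊥
    · have : c i x ∈ (c i).range := (c i).mem_range_self x
      rw [hi] at this
      exact (LieSubalgebra.mem_bot _).1 this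
    · have hiJ : i ∈ J1 := by simp [hJ1, hi]
      have := congrFun hx (e ⟨i, hiJ⟩)
      rw [LieHom.pi'_apply] at this
      have h2 : (c (e.symm (e ⟨i, hiJ⟩) : Fin m)).rangeRestrict x = 0 := this
      rw [Equiv.symm_apply_apply] at h2
      have := congrArg (Subtype.val) h2
      simpa [LieHom.rangeRestrict_apply] using this
  have hFinj : Function.Injective F := by
    intro x y hxy
    have : F (x - y) = 0 := by
      show (F : S →ₗ[ℚ] ∀ i, A i) (x - y) = 0
      rw [map_sub]
      show F x - F y = 0
      rw [hxy, sub_self]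
    have := hFzero _ this
    exact sub_eq_zero.1 this
  -- not all A i are ⊤, else we get a surjection
  have hAtop : ∃ i, A i = ⊤ := by
    by_contra hAll
    push_neg at hAll
    apply hLind
    refine ⟨k, A, fun i => ⟨?_, hAll i⟩, ?_, ?_⟩
    · have : (e.symm i : Fin m) ∈ J1 := (e.symm i).2
      simpa [hJ1, hA] using (Finset.mem_filter.1 this).2
    · -- L embeds into a power of ∏ A i
      refine ⟨I, LieHom.pi' (fun i0 => F.comp (LieHom.coord fI i0)), ?_⟩
      intro x y hxy
      apply hfI
      funext i0
      have := congrFun hxy i0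
      rw [LieHom.pi'_apply, LieHom.pi'_apply] at this
      exact hFinj this
    · -- ∏ A i embeds into a power of L
      refine ⟨Fin k, LieHom.pi' (fun i => (A i).incl.comp (LieHom.eval i)), ?_⟩
      intro x y hxy
      funext i
      have := congrFun hxy i
      rw [LieHom.pi'_apply, LieHom.pi'_apply] at this
      exact Subtype.ext this
  obtain ⟨i, hi⟩ := hAtop
  have hi' : (c (e.symm i : Fin m)).range = ⊤ := hi
  refine hns (c (e.symm i : Fin m)) ?_
  intro y
  have hy : y ∈ (c (e.symm i : Fin m)).range := by rw [hi']; exact LieSubalgebra.mem_top y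
  exact ((c (e.symm i : Fin m)).mem_range y).1 hy

end Aux

/-- geometrically equivalent geometrically indecomposable
finite-dimensional class-2 nilpotent Lie `ℚ`-algebras are isomorphic. -/
theorem isom_of_geomEquiv_of_indecomposable
    (L S : Type) [LieRing L] [LieAlgebra ℚ L] [LieRing S] [LieAlgebra ℚ S]
    [Module.Finite ℚ L] [Module.Finite ℚ S]
    (hL2 : ∀ x y z : L, ⁅x, ⁅y, z⁆⁆ = 0) (hS2 : ∀ x y z : S, ⁅x, ⁅y, z⁆⁆ = 0)
    (hLind : ¬ GeomDecomposable L) (hSind : ¬ GeomDecomposable S)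
    (h : GeomEquiv L S) :
    Nonempty (L ≃ₗ⁅ℚ⁆ S) := by
  obtain ⟨f, hf⟩ := exists_surjective_lieHom hLind h.1 h.2
  obtain ⟨g, hg⟩ := exists_surjective_lieHom hSind h.2 h.1
  have hgf : Function.Surjective ((g.comp f : S →ₗ⁅ℚ⁆ S) : S →ₗ[ℚ] S) := by
    intro y
    obtain ⟨z, hz⟩ := hg y
    obtain ⟨w, hw⟩ := hf z
    exact ⟨w, by simp [LieHom.comp_apply, hw, hz]⟩
  have hinj : Function.Injective ((g.comp f : S →ₗ⁅ℚ⁆ S) : S →ₗ[ℚ] S) :=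
    (LinearMap.injective_iff_surjective_of_finrank_eq_finrank rfl).2 hgf
  have hfinj : Function.Injective f := by
    intro a b hab
    exact hinj (by show g (f a) = g (f b); rw [hab])
  exact ⟨(LieEquiv.ofBijective f ⟨hfinj, hf⟩).symm⟩
end

section
/- Let L = V ⊕ W be a finite-dimensional nilpotent class-2 Lie ℚ-algebra with W = Z(L) = [L,L] and associated nondegenerate alternating bilinear map ω : V × V → W. If L is geometrically decomposable, then there exists a family of linear maps {ψᵢ : W → W | i ∈ I} such that for each i the alternating bilinear map ψᵢ ∘ ω : V × V → W is degenerate, and ⋂ᵢ ker ψᵢ = {0}. -/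
/-- An alternating bilinear map `V × V → W` over `ℚ`. -/
structure AltBil (V W : Type) [AddCommGroup V] [Module ℚ V]
    [AddCommGroup W] [Module ℚ W] where
  toFun : V →ₗ[ℚ] V →ₗ[ℚ] W
  alt : ∀ v : V, toFun v v = 0

variable {V W : Type} [AddCommGroup V] [Module ℚ V] [AddCommGroup W] [Module ℚ W]

/-- The nilpotent class-2 Lie algebra `V ⊕ W` with bracket `[(v,w),(v',w')] = (0, ω v v')`. -/
def Hsbg (_ω : AltBil V W) : Type := V × W

instance (ω : AltBil V W) : AddCommGroup (Hsbg ω) := inferInstanceAs (AddCommGroup (V × W))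
instance (ω : AltBil V W) : Module ℚ (Hsbg ω) := inferInstanceAs (Module ℚ (V × W))

instance (ω : AltBil V W) : LieRing (Hsbg ω) where
  bracket x y := (0, ω.toFun x.1 y.1)
  add_lie x y z := show (((0:V), ω.toFun (x.1 + y.1) z.1) : V × W)
      = ((0:V), ω.toFun x.1 z.1) + ((0:V), ω.toFun y.1 z.1) by simp [Prod.ext_iff]
  lie_add x y z := show (((0:V), ω.toFun x.1 (y.1 + z.1)) : V × W)
      = ((0:V), ω.toFun x.1 y.1) + ((0:V), ω.toFun x.1 z.1) by simp [Prod.ext_iff]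
  lie_self x := show (((0:V), ω.toFun x.1 x.1) : V × W) = 0 by simp [ω.alt]
  leibniz_lie x y z := show (((0:V), ω.toFun x.1 ((0:V), ω.toFun y.1 z.1).1) : V × W)
      = ((0:V), ω.toFun ((0:V), ω.toFun x.1 y.1).1 z.1)
        + ((0:V), ω.toFun y.1 ((0:V), ω.toFun x.1 z.1).1) by simp [Prod.ext_iff]

instance (ω : AltBil V W) : LieAlgebra ℚ (Hsbg ω) where
  lie_smul t x y := show (((0:V), ω.toFun x.1 (t • y.1)) : V × W)
      = t • (((0:V), ω.toFun x.1 y.1) : V × W) by simp [Prod.ext_iff]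

theorem Hsbg.bracket_def (ω : AltBil V W) (x y : Hsbg ω) :
    ⁅x, y⁆ = ((0 : V), ω.toFun x.1 y.1) := rfl

section AuxProof

/-- Evaluation at a coordinate, as a Lie algebra hom (for the `Pi` instances above). -/
def evalLieHom {I : Type} {L : I → Type} [∀ i, LieRing (L i)] [∀ i, LieAlgebra ℚ (L i)]
    (i : I) : (∀ i, L i) →ₗ⁅ℚ⁆ L i where
  toFun x := x i
  map_add' _ _ := rfl
  map_smul' _ _ := rfl
  map_lie' := rfl

/-- Explicit constructor for elements of `Hsbg ω`. -/
def Hmk (ω : AltBil V W) (v : V) (w : W) : Hsbg ω := (v, w)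

lemma Hmk_add (ω : AltBil V W) (a c : V) (b d : W) :
    Hmk ω a b + Hmk ω c d = Hmk ω (a + c) (b + d) := rfl

lemma Hmk_smul (ω : AltBil V W) (t : ℚ) (a : V) (b : W) :
    t • Hmk ω a b = Hmk ω (t • a) (t • b) := rfl

@[simp] lemma Hmk_fst (ω : AltBil V W) (a : V) (b : W) : (Hmk ω a b).1 = a := rfl
@[simp] lemma Hmk_snd (ω : AltBil V W) (a : V) (b : W) : (Hmk ω a b).2 = b := rfl

lemma Hmk_eta (ω : AltBil V W) (x : Hsbg ω) : Hmk ω x.1 x.2 = x := rfl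

lemma Hsbg.bracket' (ω : AltBil V W) (x y : Hsbg ω) :
    ⁅x, y⁆ = Hmk ω 0 (ω.toFun x.1 y.1) := rfl

variable {ω : AltBil V W}

/-- The `V`-part of an endomorphism of `Hsbg ω`. -/
def HsbgHom.phi (f : Hsbg ω →ₗ⁅ℚ⁆ Hsbg ω) : V →ₗ[ℚ] V where
  toFun v := (f (Hmk ω v 0)).1
  map_add' a b := by
    have e1 : Hmk ω (a + b) 0 = Hmk ω a 0 + Hmk ω b 0 := by
      rw [Hmk_add, add_zero]
    rw [e1, map_add f]
    rfl
  map_smul' t a := by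
    have e1 : Hmk ω (t • a) 0 = t • Hmk ω a 0 := by
      rw [Hmk_smul, smul_zero]
    rw [e1, map_smul f]
    rfl

/-- The `W`-part of an endomorphism of `Hsbg ω`. -/
def HsbgHom.psi (f : Hsbg ω →ₗ⁅ℚ⁆ Hsbg ω) : W →ₗ[ℚ] W where
  toFun w := (f (Hmk ω 0 w)).2
  map_add' a b := by
    have e1 : Hmk ω 0 (a + b) = Hmk ω 0 a + Hmk ω 0 b := by
      rw [Hmk_add, add_zero]
    rw [e1, map_add f]
    rfl
  map_smul' t a := by
    have e1 : Hmk ω 0 (t • a) = t • Hmk ω 0 a := by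
      rw [Hmk_smul, smul_zero]
    rw [e1, map_smul f]
    rfl

lemma HsbgHom.fst_inr_eq_zero
    (hspan : Submodule.span ℚ (Set.range fun p : V × V => ω.toFun p.1 p.2) = ⊤)
    (f : Hsbg ω →ₗ⁅ℚ⁆ Hsbg ω) (w : W) : (f (Hmk ω 0 w)).1 = 0 := by
  let g : W →ₗ[ℚ] V :=
    { toFun := fun w => (f (Hmk ω 0 w)).1
      map_add' := fun a b => by
        have e1 : Hmk ω 0 (a + b) = Hmk ω 0 a + Hmk ω 0 b := by
          rw [Hmk_add, add_zero]
        rw [e1, map_add f]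
        rfl
      map_smul' := fun t a => by
        have e1 : Hmk ω 0 (t • a) = t • Hmk ω 0 a := by
          rw [Hmk_smul, smul_zero]
        rw [e1, map_smul f]
        rfl }
  have hle : Submodule.span ℚ (Set.range fun p : V × V => ω.toFun p.1 p.2)
      ≤ LinearMap.ker g := by
    rw [Submodule.span_le]
    rintro _ ⟨⟨v1, v2⟩, rfl⟩
    simp only [SetLike.mem_coe, LinearMap.mem_ker]
    show (f (Hmk ω 0 (ω.toFun v1 v2))).1 = 0
    have hb : Hmk ω 0 (ω.toFun v1 v2) = ⁅Hmk ω v1 0, Hmk ω v2 0⁆ := by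
      rw [Hsbg.bracket', Hmk_fst, Hmk_fst]
    rw [hb, LieHom.map_lie, Hsbg.bracket', Hmk_fst]
  have htop : (⊤ : Submodule ℚ W) ≤ LinearMap.ker g := hspan ▸ hle
  exact htop Submodule.mem_top

lemma HsbgHom.psi_omega (f : Hsbg ω →ₗ⁅ℚ⁆ Hsbg ω) (v1 v2 : V) :
    HsbgHom.psi f (ω.toFun v1 v2)
      = ω.toFun (HsbgHom.phi f v1) (HsbgHom.phi f v2) := by
  have h := f.map_lie (x := Hmk ω v1 0) (y := Hmk ω v2 0)
  rw [Hsbg.bracket', Hsbg.bracket'] at h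
  simp only [Hmk_fst] at h
  exact congrArg Prod.snd h

lemma HsbgHom.surj_of_phi_inj [FiniteDimensional ℚ V]
    (hspan : Submodule.span ℚ (Set.range fun p : V × V => ω.toFun p.1 p.2) = ⊤)
    (f : Hsbg ω →ₗ⁅ℚ⁆ Hsbg ω) (hinj : Function.Injective (HsbgHom.phi f)) :
    Function.Surjective f := by
  have hφs : Function.Surjective (HsbgHom.phi f) :=
    (LinearMap.injective_iff_surjective).mp hinj
  have hψs : Function.Surjective (HsbgHom.psi f) := by
    have hle : Submodule.span ℚ (Set.range fun p : V × V => ω.toFun p.1 p.2)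
        ≤ LinearMap.range (HsbgHom.psi f) := by
      rw [Submodule.span_le]
      rintro _ ⟨⟨u1, u2⟩, rfl⟩
      simp only [SetLike.mem_coe, LinearMap.mem_range]
      obtain ⟨v1, rfl⟩ := hφs u1
      obtain ⟨v2, rfl⟩ := hφs u2
      exact ⟨ω.toFun v1 v2, HsbgHom.psi_omega f v1 v2⟩
    rw [← LinearMap.range_eq_top]
    exact top_le_iff.mp (hspan ▸ hle)
  intro x
  obtain ⟨v, hv⟩ := hφs x.1
  obtain ⟨w, hw⟩ := hψs (x.2 - (f (Hmk ω v 0)).2)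
  refine ⟨Hmk ω v w, ?_⟩
  have hsplit : Hmk ω v w = Hmk ω v 0 + Hmk ω 0 w := by
    rw [Hmk_add, add_zero, zero_add]
  rw [hsplit, map_add f]
  have h1 : (f (Hmk ω 0 w)).1 = 0 := HsbgHom.fst_inr_eq_zero hspan f w
  have hv' : (f (Hmk ω v 0)).1 = x.1 := hv
  have hw' : (f (Hmk ω 0 w)).2 = x.2 - (f (Hmk ω v 0)).2 := hw
  have : f (Hmk ω v 0) + f (Hmk ω 0 w)
      = Hmk ω ((f (Hmk ω v 0)).1 + (f (Hmk ω 0 w)).1)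
          ((f (Hmk ω v 0)).2 + (f (Hmk ω 0 w)).2) := rfl
  rw [this, h1, hv', hw', add_zero, add_sub_cancel]
  exact Hmk_eta ω x

lemma HsbgHom.degenerate_of_not_surj [FiniteDimensional ℚ V]
    (hspan : Submodule.span ℚ (Set.range fun p : V × V => ω.toFun p.1 p.2) = ⊤)
    (f : Hsbg ω →ₗ⁅ℚ⁆ Hsbg ω) (hns : ¬ Function.Surjective f) :
    ∃ x : V, x ≠ 0 ∧ ∀ v : V, HsbgHom.psi f (ω.toFun x v) = 0 := by
  have hni : ¬ Function.Injective (HsbgHom.phi f) :=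
    fun h => hns (HsbgHom.surj_of_phi_inj hspan f h)
  have hker : LinearMap.ker (HsbgHom.phi f) ≠ ⊥ := by
    intro h
    exact hni (LinearMap.ker_eq_bot.mp h)
  obtain ⟨x, hx, hx0⟩ := Submodule.exists_mem_ne_zero_of_ne_bot hker
  refine ⟨x, hx0, fun v => ?_⟩
  rw [HsbgHom.psi_omega, LinearMap.mem_ker.mp hx]
  simp

end AuxProof

/-- if the algebra `L = V ⊕ W` (with `W = Z(L) = [L,L]`) is geometrically
decomposable, there is a family `ψᵢ : W → W` of linear maps with each `ψᵢ ∘ ω`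
degenerate and `⋂ᵢ ker ψᵢ = {0}`. -/
theorem decomposable_gives_degenerate_family
    [FiniteDimensional ℚ V] [FiniteDimensional ℚ W]
    (ω : AltBil V W)
    (hnd : ∀ x : V, (∀ v : V, ω.toFun x v = 0) → x = 0)
    (hspan : Submodule.span ℚ (Set.range fun p : V × V => ω.toFun p.1 p.2) = ⊤)
    (hdec : GeomDecomposable (Hsbg ω)) :
    ∃ (I : Type) (ψ : I → (W →ₗ[ℚ] W)),
      (∀ i, ∃ x : V, x ≠ 0 ∧ ∀ v : V, ψ i (ω.toFun x v) = 0) ∧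
      (⨅ i, LinearMap.ker (ψ i)) = ⊥ := by
  obtain ⟨k, A, hA, ⟨J, e, he⟩, -⟩ := hdec
  classical
  let F : J × Fin k → (Hsbg ω →ₗ⁅ℚ⁆ Hsbg ω) := fun p =>
    ((A p.2).incl.comp (evalLieHom p.2)).comp ((evalLieHom p.1).comp e)
  refine ⟨J × Fin k, fun p => HsbgHom.psi (F p), fun p => ?_, ?_⟩
  · refine HsbgHom.degenerate_of_not_surj hspan (F p) (fun hs => (hA p.2).2 ?_)
    ext x
    simp only [LieSubalgebra.mem_top, iff_true]
    obtain ⟨y, hy⟩ := hs x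
    have hmem : F p y ∈ A p.2 := (e y p.1 p.2).2
    rwa [hy] at hmem
  · rw [eq_bot_iff]
    intro w hw
    simp only [Submodule.mem_iInf, LinearMap.mem_ker] at hw
    have hz : ∀ p : J × Fin k, F p (Hmk ω 0 w) = 0 := by
      intro p
      have h1 : (F p (Hmk ω 0 w)).1 = 0 := HsbgHom.fst_inr_eq_zero hspan (F p) w
      have h2 : (F p (Hmk ω 0 w)).2 = 0 := hw p
      have : F p (Hmk ω 0 w) = Hmk ω (F p (Hmk ω 0 w)).1 (F p (Hmk ω 0 w)).2 :=
        (Hmk_eta ω _).symm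
      rw [this, h1, h2]
      rfl
    have he0 : e (Hmk ω 0 w) = 0 := by
      funext j
      funext i
      exact Subtype.ext (hz (j, i))
    have h0 : Hmk ω 0 w = 0 := he (by rw [he0, map_zero])
    exact congrArg Prod.snd h0
end

section
/- With E(L) defined as above, the alternating bilinear map ω_{E(L)} : (U ⊕ V) × (U ⊕ V) → W ⊕ T satisfies: for every linear map ψ : W ⊕ T → W ⊕ T with ψ(t) ≠ 0, the composite alternating bilinear map ψ ∘ ω_{E(L)} is nondegenerate. Consequently (by the decomposability criterion), E(L) is geometrically indecomposable. -/
variable {V W : Type} [AddCommGroup V] [Module ℚ V] [AddCommGroup W] [Module ℚ W]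

/-- The pairing `(u, v) ↦ Σᵢ uᵢ · (coordinates of v)ᵢ` attached to a basis `b` of `V`. -/
noncomputable def basisPairing {n : ℕ} (b : Module.Basis (Fin n) ℚ V) : (Fin n → ℚ) →ₗ[ℚ] V →ₗ[ℚ] ℚ :=
  LinearMap.mk₂ ℚ (fun u v => ∑ i, u i * b.repr v i)
    (by intros m₁ m₂ v; simp [add_mul, Finset.sum_add_distrib])
    (by intros c m v; simp [Finset.mul_sum, mul_assoc])
    (by intros m v₁ v₂; simp [mul_add, Finset.sum_add_distrib])
    (by intros c m v; simp [Finset.mul_sum, mul_left_comm])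

/-- The alternating bilinear map of the extension `E(L)`:
`ω_E((u,v),(u',v')) = (⟨u,v'⟩ - ⟨u',v⟩, ω(v,v'))` on `(U ⊕ V) × (U ⊕ V) → T ⊕ W`,
where `U = ℚⁿ`, `T = ℚ`. -/
noncomputable def extAltBil {n : ℕ} (ω : AltBil V W) (b : Module.Basis (Fin n) ℚ V) :
    AltBil ((Fin n → ℚ) × V) (ℚ × W) where
  toFun :=
    LinearMap.mk₂ ℚ
      (fun x y => (basisPairing b x.1 y.2 - basisPairing b y.1 x.2, ω.toFun x.2 y.2))
      (by intros m₁ m₂ v; simp [Prod.ext_iff]; ring)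
      (by intros c m v; simp [Prod.smul_mk, smul_sub, smul_eq_mul, Prod.ext_iff]; ring)
      (by intros m v₁ v₂; simp [Prod.ext_iff]; ring)
      (by intros c m v; simp [Prod.smul_mk, smul_sub, smul_eq_mul, Prod.ext_iff]; ring)
  alt x := by simp [Prod.ext_iff, ω.alt]

/-- The extension `E(L)` of `L = V ⊕ W`: the class-2 nilpotent Lie algebra on
`(U ⊕ V) ⊕ (T ⊕ W)` with `[uᵢ,uⱼ] = 0`, `[uᵢ,vⱼ] = δᵢⱼ t`, `[vᵢ,vⱼ] = ω(vᵢ,vⱼ)`,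
`T ⊕ W` central. -/
def ExtE {n : ℕ} (ω : AltBil V W) (b : Module.Basis (Fin n) ℚ V) : Type :=
  Hsbg (extAltBil ω b)

noncomputable instance {n : ℕ} (ω : AltBil V W) (b : Module.Basis (Fin n) ℚ V) : LieRing (ExtE ω b) :=
  inferInstanceAs (LieRing (Hsbg (extAltBil ω b)))
noncomputable instance {n : ℕ} (ω : AltBil V W) (b : Module.Basis (Fin n) ℚ V) : LieAlgebra ℚ (ExtE ω b) :=
  inferInstanceAs (LieAlgebra ℚ (Hsbg (extAltBil ω b)))

-- auxiliary development, to be inserted before the theorem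
section MyAux

lemma basisPairing_apply {n : ℕ} (b : Module.Basis (Fin n) ℚ V) (u : Fin n → ℚ) (v : V) :
    basisPairing b u v = ∑ i, u i * b.repr v i := rfl

lemma basisPairing_basis {n : ℕ} (b : Module.Basis (Fin n) ℚ V) (u : Fin n → ℚ) (j : Fin n) :
    basisPairing b u (b j) = u j := by
  simp [basisPairing_apply, Module.Basis.repr_self, Finsupp.single_apply]

lemma basisPairing_single {n : ℕ} (b : Module.Basis (Fin n) ℚ V) (j : Fin n) (v : V) :
    basisPairing b (Pi.single j 1) v = b.repr v j := by
  simp [basisPairing_apply, Pi.single_apply]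

lemma extAltBil_apply {n : ℕ} (ω : AltBil V W) (b : Module.Basis (Fin n) ℚ V)
    (x y : (Fin n → ℚ) × V) :
    (extAltBil ω b).toFun x y
      = (basisPairing b x.1 y.2 - basisPairing b y.1 x.2, ω.toFun x.2 y.2) := rfl

lemma extE_part1 {n : ℕ} (ω : AltBil V W) (b : Module.Basis (Fin n) ℚ V) :
    ∀ ψ : (ℚ × W) →ₗ[ℚ] (ℚ × W), ψ ((1 : ℚ), (0 : W)) ≠ 0 →
      ∀ x : (Fin n → ℚ) × V,
        (∀ y : (Fin n → ℚ) × V, ψ ((extAltBil ω b).toFun x y) = 0) → x = 0 := by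
  intro ψ hψ x hx
  have hv : x.2 = 0 := by
    by_contra hv
    obtain ⟨j, hj⟩ : ∃ j, b.repr x.2 j ≠ 0 := by
      by_contra h
      push_neg at h
      exact hv ((LinearEquiv.map_eq_zero_iff b.repr).1 (Finsupp.ext h))
    have h0 := hx (Pi.single j 1, 0)
    rw [extAltBil_apply] at h0
    simp only [basisPairing_single, map_zero, LinearMap.zero_apply] at h0
    -- h0 : ψ (0 - b.repr x.2 j, 0) = 0
    have h1 : ((0 : ℚ) - b.repr x.2 j, (0:W)) = (- b.repr x.2 j) • ((1:ℚ), (0:W)) := by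
      simp [Prod.ext_iff]
    rw [h1, map_smul] at h0
    exact hψ (by
      have := smul_eq_zero.mp h0
      rcases this with h | h
      · exact absurd (neg_eq_zero.mp h) hj
      · exact h)
  have hu : x.1 = 0 := by
    funext j
    have h0 := hx (0, b j)
    rw [extAltBil_apply] at h0
    simp only [basisPairing_basis, hv, map_zero, LinearMap.zero_apply] at h0
    -- h0 : ψ (x.1 j - 0, 0) = 0  (ω x.2 (b j) = 0 since x.2 = 0)
    have h1 : (x.1 j - (0:ℚ), (0:W)) = (x.1 j) • ((1:ℚ), (0:W)) := by
      simp [Prod.ext_iff]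
    rw [h1, map_smul] at h0
    rcases smul_eq_zero.mp h0 with h | h
    · exact h
    · exact absurd h hψ
  exact Prod.ext hu hv

end MyAux


section MyAux2

/-- Evaluation at a point is a Lie algebra hom for the Pi instance. -/
def myEvalLieHom {I : Type} {L : I → Type} [∀ i, LieRing (L i)]
    [∀ i, LieAlgebra ℚ (L i)] (i : I) : (∀ i, L i) →ₗ⁅ℚ⁆ L i :=
  { LinearMap.proj i with map_lie' := rfl }

/-- Constructor for elements of `ExtE`, with the right type. -/
def mkE {n : ℕ} (ω : AltBil V W) (b : Module.Basis (Fin n) ℚ V)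
    (a : (Fin n → ℚ) × V) (c : ℚ × W) : ExtE ω b := (a, c)

@[simp] lemma mkE_fst {n : ℕ} (ω : AltBil V W) (b : Module.Basis (Fin n) ℚ V)
    (a : (Fin n → ℚ) × V) (c : ℚ × W) : (mkE ω b a c).1 = a := rfl

@[simp] lemma mkE_snd {n : ℕ} (ω : AltBil V W) (b : Module.Basis (Fin n) ℚ V)
    (a : (Fin n → ℚ) × V) (c : ℚ × W) : (mkE ω b a c).2 = c := rfl

lemma extE_span_aux {n : ℕ} (ω : AltBil V W) (b : Module.Basis (Fin n) ℚ V)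
    (hspan : Submodule.span ℚ (Set.range fun p : V × V => ω.toFun p.1 p.2) = ⊤)
    (hn : 0 < n) (Q : Submodule ℚ (ℚ × W))
    (hQ : ∀ a a' : (Fin n → ℚ) × V, (extAltBil ω b).toFun a a' ∈ Q) : Q = ⊤ := by
  rw [Submodule.eq_top_iff']
  intro x
  have h1 : ((1 : ℚ), (0 : W)) ∈ Q := by
    have h := hQ (Pi.single ⟨0, hn⟩ 1, 0) (0, b ⟨0, hn⟩)
    rw [extAltBil_apply] at h
    simpa [basisPairing_single] using h
  have h2 : ∀ w : W, ((0 : ℚ), w) ∈ Q := by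
    intro w
    have hw : w ∈ Submodule.span ℚ (Set.range fun p : V × V => ω.toFun p.1 p.2) :=
      hspan ▸ Submodule.mem_top
    have hle : Submodule.span ℚ (Set.range fun p : V × V => ω.toFun p.1 p.2)
        ≤ Submodule.comap (LinearMap.inr ℚ ℚ W) Q := by
      rw [Submodule.span_le]
      rintro _ ⟨p, rfl⟩
      have h := hQ (0, p.1) (0, p.2)
      rw [extAltBil_apply] at h
      simpa using h
    simpa using hle hw
  have hx : x = x.1 • ((1 : ℚ), (0 : W)) + ((0 : ℚ), x.2) := by
    simp [Prod.ext_iff]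
  rw [hx]
  exact Q.add_mem (Q.smul_mem _ h1) (h2 _)

set_option maxHeartbeats 1000000 in
lemma extE_hom_kills_t [FiniteDimensional ℚ V]
    {n : ℕ} (ω : AltBil V W) (b : Module.Basis (Fin n) ℚ V)
    (hspan : Submodule.span ℚ (Set.range fun p : V × V => ω.toFun p.1 p.2) = ⊤)
    (A : LieSubalgebra ℚ (ExtE ω b)) (hA : A ≠ ⊤)
    (φ : ExtE ω b →ₗ⁅ℚ⁆ ExtE ω b) (hφ : ∀ x, φ x ∈ A) :
    φ (mkE ω b 0 ((1 : ℚ), (0 : W))) = 0 := by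
  rcases Nat.eq_zero_or_pos n with hn | hn
  · -- degenerate case: V and W are trivial, E is a line
    subst hn
    have hV : ∀ v : V, v = 0 := by
      intro v
      have h : b.repr v = 0 := Finsupp.ext fun j => j.elim0
      exact (LinearEquiv.map_eq_zero_iff b.repr).1 h
    have hW : ∀ w : W, w = 0 := by
      intro w
      have hw : w ∈ Submodule.span ℚ (Set.range fun p : V × V => ω.toFun p.1 p.2) :=
        hspan ▸ Submodule.mem_top
      have hle : Submodule.span ℚ (Set.range fun p : V × V => ω.toFun p.1 p.2)
          ≤ (⊥ : Submodule ℚ W) := by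
        rw [Submodule.span_le]
        rintro _ ⟨p, rfl⟩
        simp [hV p.1]
      simpa using hle hw
    set z : ExtE ω b := mkE ω b 0 ((1 : ℚ), (0 : W)) with hzdef
    have hall : ∀ x : ExtE ω b, x = x.2.1 • z := by
      intro x
      apply Prod.ext
      · show x.1 = x.2.1 • (0 : (Fin 0 → ℚ) × V)
        rw [smul_zero]
        exact Prod.ext (funext fun j => j.elim0) (hV _)
      · show x.2 = x.2.1 • ((1 : ℚ), (0 : W))
        have h : x.2.1 • ((1 : ℚ), (0 : W)) = (x.2.1, (0 : W)) := by simp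
        rw [h]
        exact Prod.ext rfl (hW _)
    by_contra hne
    have hs : (φ z).2.1 ≠ 0 := by
      intro h0
      exact hne (by rw [hall (φ z), h0, zero_smul])
    apply hA
    ext x
    simp only [LieSubalgebra.mem_top, iff_true]
    have hx : x = (x.2.1 * ((φ z).2.1)⁻¹) • φ z := by
      have h2 := hall (φ z)
      set s := (φ z).2.1 with hs'
      rw [h2, smul_smul, mul_assoc, inv_mul_cancel₀ hs, mul_one]
      exact hall x
    rw [hx]
    exact A.smul_mem _ (hφ z)
  · -- main case
    set β := (extAltBil ω b).toFun with hβ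
    have hbr : ∀ x y : ExtE ω b, ⁅x, y⁆ = mkE ω b 0 (β x.1 y.1) := fun _ _ => rfl
    set ψ : (ℚ × W) →ₗ[ℚ] (ℚ × W) :=
      (LinearMap.snd ℚ _ _).comp (φ.toLinearMap.comp (LinearMap.inr ℚ _ _)) with hψdef
    set g : ((Fin n → ℚ) × V) →ₗ[ℚ] ((Fin n → ℚ) × V) :=
      (LinearMap.fst ℚ _ _).comp (φ.toLinearMap.comp (LinearMap.inl ℚ _ _)) with hgdef
    have hψa : ∀ c, ψ c = (φ (mkE ω b 0 c)).2 := fun _ => rfl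
    have hga : ∀ a, g a = (φ (mkE ω b a 0)).1 := fun _ => rfl
    -- φ maps the centre slice into the centre slice
    have hc1 : ∀ c : ℚ × W, φ (mkE ω b 0 c) = mkE ω b 0 (ψ c) := by
      set L1 : (ℚ × W) →ₗ[ℚ] ((Fin n → ℚ) × V) :=
        (LinearMap.fst ℚ _ _).comp (φ.toLinearMap.comp (LinearMap.inr ℚ _ _)) with hL1
      have hL1a : ∀ c, L1 c = (φ (mkE ω b 0 c)).1 := fun _ => rfl
      have hker : LinearMap.ker L1 = ⊤ := by
        apply extE_span_aux ω b hspan hn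
        intro a a'
        rw [LinearMap.mem_ker, hL1a]
        have h1 : mkE ω b 0 (β a a') = ⁅mkE ω b a 0, mkE ω b a' 0⁆ := by
          rw [hbr]
          simp only [mkE_fst]
        rw [h1, φ.map_lie, hbr]
        simp only [mkE_fst]
      intro c
      have hc : L1 c = 0 := by
        have h : c ∈ LinearMap.ker L1 := by rw [hker]; exact Submodule.mem_top
        exact h
      exact Prod.ext (hL1a c ▸ hc) rfl
    -- the key identity
    have hkey : ∀ a a' : (Fin n → ℚ) × V, ψ (β a a') = β (g a) (g a') := by
      intro a a'
      have h1 : φ (mkE ω b 0 (β a a')) = mkE ω b 0 (ψ (β a a')) := hc1 _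
      have h2 : φ (mkE ω b 0 (β a a')) = mkE ω b 0 (β (g a) (g a')) := by
        have e1 : mkE ω b 0 (β a a') = ⁅mkE ω b a 0, mkE ω b a' 0⁆ := by
          rw [hbr]; simp only [mkE_fst]
        rw [e1, φ.map_lie, hbr, hga a, hga a']
      have h3 := congrArg (fun x : ExtE ω b => x.2) (h1.symm.trans h2)
      simpa only [mkE_snd] using h3
    by_cases hψt : ψ ((1 : ℚ), (0 : W)) = 0
    · rw [hc1, hψt]
      rfl
    · exfalso
      apply hA
      have hginj : Function.Injective g := by
        rw [← LinearMap.ker_eq_bot, Submodule.eq_bot_iff]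
        intro a ha
        rw [LinearMap.mem_ker] at ha
        apply extE_part1 ω b ψ hψt a
        intro y
        rw [← hβ, hkey a y, ha]
        simp only [map_zero, LinearMap.zero_apply]
      have hgsurj : Function.Surjective g :=
        LinearMap.injective_iff_surjective.1 hginj
      have hstep1 : ∀ a : (Fin n → ℚ) × V, ∃ c : ℚ × W, mkE ω b a c ∈ A := by
        intro a
        obtain ⟨a₀, ha₀⟩ := hgsurj a
        refine ⟨(φ (mkE ω b a₀ 0)).2, ?_⟩
        have h1 : a = (φ (mkE ω b a₀ 0)).1 := by rw [← hga, ha₀]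
        have h2 : mkE ω b a ((φ (mkE ω b a₀ 0)).2) = φ (mkE ω b a₀ 0) :=
          Prod.ext h1 rfl
        rw [h2]
        exact hφ _
      have hstep2 : ∀ c : ℚ × W, mkE ω b 0 c ∈ A := by
        set Q2 : Submodule ℚ (ℚ × W) :=
          Submodule.comap
            ((LinearMap.inr ℚ ((Fin n → ℚ) × V) (ℚ × W)) : (ℚ × W) →ₗ[ℚ] ExtE ω b)
            A.toSubmodule with hQ2
        have hinr : ∀ c : ℚ × W,
            ((LinearMap.inr ℚ ((Fin n → ℚ) × V) (ℚ × W)) : (ℚ × W) →ₗ[ℚ] ExtE ω b) c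
              = mkE ω b 0 c := fun _ => rfl
        have hQtop : Q2 = ⊤ := by
          apply extE_span_aux ω b hspan hn
          intro a a'
          obtain ⟨c, hc⟩ := hstep1 a
          obtain ⟨c', hc'⟩ := hstep1 a'
          have hbb := A.lie_mem hc hc'
          rw [hbr] at hbb
          simp only [mkE_fst] at hbb
          exact hbb
        intro c
        have hc : c ∈ Q2 := by rw [hQtop]; exact Submodule.mem_top
        exact hc
      ext x
      simp only [LieSubalgebra.mem_top, iff_true]
      obtain ⟨c, hc⟩ := hstep1 x.1
      have h2 := hstep2 (x.2 - c)
      have hsum := A.add_mem hc h2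
      have hx : mkE ω b x.1 c + mkE ω b 0 (x.2 - c) = x := by
        apply Prod.ext
        · show x.1 + 0 = x.1
          rw [add_zero]
        · show c + (x.2 - c) = x.2
          abel
      rwa [hx] at hsum

end MyAux2


/-- any linear `ψ` on `T ⊕ W` not killing `t` makes `ψ ∘ ω_{E(L)}`
nondegenerate; consequently `E(L)` is geometrically indecomposable. -/
theorem extE_geometrically_indecomposable
    [FiniteDimensional ℚ V] [FiniteDimensional ℚ W]
    {n : ℕ} (ω : AltBil V W) (b : Module.Basis (Fin n) ℚ V)
    (hnd : ∀ x : V, (∀ v : V, ω.toFun x v = 0) → x = 0)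
    (hspan : Submodule.span ℚ (Set.range fun p : V × V => ω.toFun p.1 p.2) = ⊤) :
    (∀ ψ : (ℚ × W) →ₗ[ℚ] (ℚ × W), ψ ((1 : ℚ), (0 : W)) ≠ 0 →
      ∀ x : (Fin n → ℚ) × V,
        (∀ y : (Fin n → ℚ) × V, ψ ((extAltBil ω b).toFun x y) = 0) → x = 0) ∧
    ¬ GeomDecomposable (ExtE ω b) := by
  refine ⟨extE_part1 ω b, ?_⟩
  rintro ⟨k, A, hA, ⟨I, f, hf⟩, -⟩
  set z : ExtE ω b := mkE ω b 0 ((1 : ℚ), (0 : W)) with hzdef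
  have hz0 : z ≠ 0 := by
    intro h
    have h1 := congrArg (fun x : ExtE ω b => x.2.1) h
    simp only [hzdef, mkE_snd] at h1
    exact one_ne_zero h1
  have hfz : f z = 0 := by
    funext j i
    have hcoe : ((f z j i : ExtE ω b)) = 0 := by
      set φ : ExtE ω b →ₗ⁅ℚ⁆ ExtE ω b :=
        ((A i).incl.comp (myEvalLieHom i)).comp ((myEvalLieHom j).comp f) with hφdef
      have hφr : ∀ x, φ x ∈ A i := fun x => (f x j i).2
      exact extE_hom_kills_t ω b hspan (A i) (hA i).2 φ hφr
    exact Subtype.ext hcoe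
  exact hz0 (hf (hfz.trans f.map_zero.symm))
end

section
/- In E(L) as above, the subspace H = U ⊕ T is a Lie ideal of E(L), satisfying dim(H ∩ Z(E(L))) = 1, and the quotient E(L)/H is isomorphic as a Lie algebra to L. -/
variable {V W : Type} [AddCommGroup V] [Module ℚ V] [AddCommGroup W] [Module ℚ W]

/-- The identification of `E(L)` with its underlying product of vector spaces. -/
def ExtE.toProd {n : ℕ} {ω : AltBil V W} {b : Module.Basis (Fin n) ℚ V}
    (x : ExtE ω b) : ((Fin n → ℚ) × V) × (ℚ × W) := x

/-- The projection `E(L) → L`, `((u,v),(t,w)) ↦ (v,w)`, as a Lie algebra hom. -/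
def extProj {n : ℕ} (ω : AltBil V W) (b : Module.Basis (Fin n) ℚ V) :
    ExtE ω b →ₗ⁅ℚ⁆ Hsbg ω where
  toFun x := ((x.toProd.1.2, x.toProd.2.2) : Hsbg ω)
  map_add' x y := rfl
  map_smul' c x := rfl
  map_lie' {x y} := rfl

theorem extProj_surjective {n : ℕ} (ω : AltBil V W) (b : Module.Basis (Fin n) ℚ V) :
    Function.Surjective (extProj ω b) :=
  fun p => ⟨(((0 : Fin n → ℚ), p.1), ((0 : ℚ), p.2)), rfl⟩

/-- `H = U ⊕ T` is an ideal of `E(L)` with `dim (H ∩ Z(E(L))) = 1`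
and `E(L)/H ≅ L`. -/
theorem extE_has_ideal_with_quotient_L
    [FiniteDimensional ℚ V] [FiniteDimensional ℚ W]
    {n : ℕ} (ω : AltBil V W) (b : Module.Basis (Fin n) ℚ V)
    (hnd : ∀ x : V, (∀ v : V, ω.toFun x v = 0) → x = 0)
    (hspan : Submodule.span ℚ (Set.range fun p : V × V => ω.toFun p.1 p.2) = ⊤) :
    ∃ H : LieIdeal ℚ (ExtE ω b),
      (H : Set (ExtE ω b)) = {x : ExtE ω b | x.toProd.1.2 = 0 ∧ x.toProd.2.2 = 0} ∧
      Module.finrank ℚ ↥(H ⊓ LieAlgebra.center ℚ (ExtE ω b)) = 1 ∧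
      Nonempty ((ExtE ω b ⧸ H) ≃ₗ⁅ℚ⁆ Hsbg ω) := by
  classical
  set f := extProj ω b with hf
  refine ⟨f.ker, ?_, ?_, ?_⟩
  · ext x
    simp only [SetLike.mem_coe, LieHom.mem_ker, Set.mem_setOf_eq]
    constructor
    · intro h
      exact ⟨congrArg Prod.fst h, congrArg Prod.snd h⟩
    · rintro ⟨h1, h2⟩
      exact Prod.ext h1 h2
  · -- dimension of H ⊓ Z(E) is 1
    set t₀ : ExtE ω b := (((0 : Fin n → ℚ), (0 : V)), ((1 : ℚ), (0 : W))) with ht₀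
    have ht₀ne : t₀ ≠ 0 := by
      intro h
      have := congrArg (fun z : ((Fin n → ℚ) × V) × (ℚ × W) => z.2.1) h
      exact one_ne_zero this
    have hmem : t₀ ∈ f.ker ⊓ LieAlgebra.center ℚ (ExtE ω b) := by
      rw [LieSubmodule.mem_inf]
      constructor
      · show f t₀ = 0
        rfl
      · rw [LieModule.mem_maxTrivSubmodule]
        intro y
        show (((0 : (Fin n → ℚ) × V), (extAltBil ω b).toFun y.1 t₀.1) :
          ((Fin n → ℚ) × V) × (ℚ × W)) = 0
        have : t₀.1 = 0 := rfl
        rw [this, map_zero]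
        rfl
    have hsub : ((f.ker ⊓ LieAlgebra.center ℚ (ExtE ω b)) :
        Submodule ℚ (ExtE ω b)) = Submodule.span ℚ {t₀} := by
      apply le_antisymm
      · intro x hx
        rw [Submodule.mem_inf] at hx
        obtain ⟨hk, hc⟩ := hx
        have hk' : f x = 0 := hk
        have h12 : x.toProd.1.2 = 0 := congrArg Prod.fst hk'
        have h22 : x.toProd.2.2 = 0 := congrArg Prod.snd hk'
        have hc : ∀ y : ExtE ω b, ⁅y, x⁆ = 0 := hc
        have h11 : x.toProd.1.1 = 0 := by
          funext j
          have hb := hc ((((0 : Fin n → ℚ), b j), ((0 : ℚ), (0 : W))) : ExtE ω b)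
          have hb2 : (((0 : (Fin n → ℚ) × V),
              (extAltBil ω b).toFun ((0 : Fin n → ℚ), b j) x.toProd.1) :
              ((Fin n → ℚ) × V) × (ℚ × W)) = 0 := hb
          have hcomp := congrArg
            (fun z : ((Fin n → ℚ) × V) × (ℚ × W) => z.2.1) hb2
          simp only [extAltBil, basisPairing, LinearMap.mk₂_apply] at hcomp
          simpa [Module.Basis.repr_self, Finsupp.single_apply, h12] using hcomp
        rw [Submodule.mem_span_singleton]
        refine ⟨x.toProd.2.1, ?_⟩
        show (x.toProd.2.1 • t₀ : ((Fin n → ℚ) × V) × (ℚ × W)) = x.toProd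
        refine Prod.ext (Prod.ext ?_ ?_) (Prod.ext ?_ ?_)
        · show x.toProd.2.1 • (0 : Fin n → ℚ) = x.toProd.1.1
          rw [smul_zero, h11]
        · show x.toProd.2.1 • (0 : V) = x.toProd.1.2
          rw [smul_zero, h12]
        · show x.toProd.2.1 • (1 : ℚ) = x.toProd.2.1
          rw [smul_eq_mul, mul_one]
        · show x.toProd.2.1 • (0 : W) = x.toProd.2.2
          rw [smul_zero, h22]
      · rw [Submodule.span_le, Set.singleton_subset_iff]
        exact hmem
    have heq : Module.finrank ℚ ↥(f.ker ⊓ LieAlgebra.center ℚ (ExtE ω b)) =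
        Module.finrank ℚ ↥(Submodule.span ℚ {t₀}) :=
      LinearEquiv.finrank_eq (LinearEquiv.ofEq _ _ hsub)
    rw [heq, finrank_span_singleton ht₀ne]
  · -- quotient iso
    have hr : ((f.range : LieSubalgebra ℚ (Hsbg ω)) : Set (Hsbg ω)) =
        ((⊤ : LieSubalgebra ℚ (Hsbg ω)) : Set (Hsbg ω)) := by
      rw [LieHom.coe_range]
      exact Set.eq_univ_of_forall fun p => extProj_surjective ω b p
    exact ⟨f.quotKerEquivRange.trans
      ((LieEquiv.ofEq _ _ hr).trans LieSubalgebra.topEquiv)⟩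
end

section
/- Let α : E(L₁) → E(L₂) be an isomorphism of Lie algebras, where E(Lᵢ) = Uᵢ ⊕ Vᵢ ⊕ Tᵢ ⊕ Wᵢ as above and Hᵢ = Uᵢ ⊕ Tᵢ. Then α(H₁) ⊆ U₂ ⊕ Z(E(L₂)), α(H₁) ∩ Z(E(L₂)) = T₂, α(H₁) ∩ L₂ = {0}, E(L₂) = α(H₁) ⊕ L₂ as vector spaces, and consequently L₁ ≅ E(L₁)/H₁ ≅ E(L₂)/α(H₁) ≅ L₂. -/
variable {V W : Type} [AddCommGroup V] [Module ℚ V] [AddCommGroup W] [Module ℚ W]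

/-- Projection of `E(L) = U ⊕ V ⊕ T ⊕ W` onto `V ⊕ W`; its kernel is `H = U ⊕ T`. -/
def ExtE.projVW {n : ℕ} (ω : AltBil V W) (b : Module.Basis (Fin n) ℚ V) :
    ExtE ω b →ₗ[ℚ] V × W where
  toFun x := (x.toProd.1.2, x.toProd.2.2)
  map_add' _ _ := rfl
  map_smul' _ _ := rfl

/-- Projection of `E(L)` onto `V`; its kernel is `U ⊕ T ⊕ W = U ⊕ Z(E(L))`. -/
def ExtE.projV {n : ℕ} (ω : AltBil V W) (b : Module.Basis (Fin n) ℚ V) :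
    ExtE ω b →ₗ[ℚ] V where
  toFun x := x.toProd.1.2
  map_add' _ _ := rfl
  map_smul' _ _ := rfl

/-- Projection of `E(L)` onto `U ⊕ V ⊕ W`; its kernel is `T`. -/
def ExtE.projUVW {n : ℕ} (ω : AltBil V W) (b : Module.Basis (Fin n) ℚ V) :
    ExtE ω b →ₗ[ℚ] ((Fin n → ℚ) × V) × W where
  toFun x := (x.toProd.1, x.toProd.2.2)
  map_add' _ _ := rfl
  map_smul' _ _ := rfl

/-- Projection of `E(L)` onto `U ⊕ T`; its kernel is `L = V ⊕ W`. -/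
def ExtE.projUT {n : ℕ} (ω : AltBil V W) (b : Module.Basis (Fin n) ℚ V) :
    ExtE ω b →ₗ[ℚ] (Fin n → ℚ) × ℚ where
  toFun x := (x.toProd.1.1, x.toProd.2.1)
  map_add' _ _ := rfl
  map_smul' _ _ := rfl

section Test
variable {V W : Type} [AddCommGroup V] [Module ℚ V] [AddCommGroup W] [Module ℚ W] {n : ℕ}

lemma pair_basis (b : Module.Basis (Fin n) ℚ V) (u : Fin n → ℚ) (j : Fin n) :
    basisPairing b u (b j) = u j := by
  simp [basisPairing, Finsupp.single_apply]

lemma pair_single (b : Module.Basis (Fin n) ℚ V) (j : Fin n) (v : V) :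
    basisPairing b (Pi.single j 1) v = b.repr v j := by
  simp [basisPairing, Pi.single_apply, ite_mul]

lemma ExtE.ext' {ω : AltBil V W} {b : Module.Basis (Fin n) ℚ V} {x y : ExtE ω b}
    (h1 : x.1.1 = y.1.1) (h2 : x.1.2 = y.1.2) (h3 : x.2.1 = y.2.1) (h4 : x.2.2 = y.2.2) :
    x = y := by
  show x.toProd = y.toProd
  exact Prod.ext (Prod.ext h1 h2) (Prod.ext h3 h4)

lemma ExtE.toProd_def {ω : AltBil V W} {b : Module.Basis (Fin n) ℚ V} (x : ExtE ω b) :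
    x.toProd = x := rfl

lemma ExtE.bracket_eq (ω : AltBil V W) (b : Module.Basis (Fin n) ℚ V) (x y : ExtE ω b) :
    ⁅x, y⁆ = ((((0 : Fin n → ℚ), (0 : V)),
      (basisPairing b x.1.1 y.1.2 - basisPairing b y.1.1 x.1.2,
       ω.toFun x.1.2 y.1.2)) : ExtE ω b) := rfl

def Et (ω : AltBil V W) (b : Module.Basis (Fin n) ℚ V) : ExtE ω b := ((0, 0), (1, 0))

lemma ExtE.smul_fst {ω : AltBil V W} {b : Module.Basis (Fin n) ℚ V} (s : ℚ) (x : ExtE ω b) :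
    (s • x).1 = s • x.1 := rfl

lemma ExtE.smul_snd {ω : AltBil V W} {b : Module.Basis (Fin n) ℚ V} (s : ℚ) (x : ExtE ω b) :
    (s • x).2 = s • x.2 := rfl

lemma ExtE.add_fst {ω : AltBil V W} {b : Module.Basis (Fin n) ℚ V} (x y : ExtE ω b) :
    (x + y).1 = x.1 + y.1 := rfl
lemma ExtE.add_snd {ω : AltBil V W} {b : Module.Basis (Fin n) ℚ V} (x y : ExtE ω b) :
    (x + y).2 = x.2 + y.2 := rfl
lemma Hsbg.add_fst {ω : AltBil V W} (x y : Hsbg ω) : (x + y).1 = x.1 + y.1 := rfl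
lemma Hsbg.add_snd {ω : AltBil V W} (x y : Hsbg ω) : (x + y).2 = x.2 + y.2 := rfl
lemma Hsbg.smul_fst {ω : AltBil V W} (s : ℚ) (x : Hsbg ω) : (s • x).1 = s • x.1 := rfl
lemma Hsbg.smul_snd {ω : AltBil V W} (s : ℚ) (x : Hsbg ω) : (s • x).2 = s • x.2 := rfl

lemma ExtE.zero_c11 {ω : AltBil V W} {b : Module.Basis (Fin n) ℚ V} : (0 : ExtE ω b).1.1 = 0 := rfl
lemma ExtE.zero_c12 {ω : AltBil V W} {b : Module.Basis (Fin n) ℚ V} : (0 : ExtE ω b).1.2 = 0 := rfl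
lemma ExtE.zero_c21 {ω : AltBil V W} {b : Module.Basis (Fin n) ℚ V} : (0 : ExtE ω b).2.1 = 0 := rfl
lemma ExtE.zero_c22 {ω : AltBil V W} {b : Module.Basis (Fin n) ℚ V} : (0 : ExtE ω b).2.2 = 0 := rfl

lemma Et_c11 (ω : AltBil V W) (b : Module.Basis (Fin n) ℚ V) : (Et ω b).1.1 = 0 := rfl
lemma Et_c12 (ω : AltBil V W) (b : Module.Basis (Fin n) ℚ V) : (Et ω b).1.2 = 0 := rfl
lemma Et_c21 (ω : AltBil V W) (b : Module.Basis (Fin n) ℚ V) : (Et ω b).2.1 = 1 := rfl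
lemma Et_c22 (ω : AltBil V W) (b : Module.Basis (Fin n) ℚ V) : (Et ω b).2.2 = 0 := rfl

end Test

section Aux16
variable {V₁ W₁ V₂ W₂ : Type}
    [AddCommGroup V₁] [Module ℚ V₁] [AddCommGroup W₁] [Module ℚ W₁]
    [AddCommGroup V₂] [Module ℚ V₂] [AddCommGroup W₂] [Module ℚ W₂]
    {n : ℕ} {ω₁ : AltBil V₁ W₁} {ω₂ : AltBil V₂ W₂}
    {b₁ : Module.Basis (Fin n) ℚ V₁} {b₂ : Module.Basis (Fin n) ℚ V₂}

lemma lieEquiv_map_lie (α : ExtE ω₁ b₁ ≃ₗ⁅ℚ⁆ ExtE ω₂ b₂) (x y : ExtE ω₁ b₁) :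
    α ⁅x, y⁆ = ⁅α x, α y⁆ := LieHom.map_lie α.toLieHom x y

lemma lieEquiv_map_smul (α : ExtE ω₁ b₁ ≃ₗ⁅ℚ⁆ ExtE ω₂ b₂) (s : ℚ) (x : ExtE ω₁ b₁) :
    α (s • x) = s • α x := map_smul α.toLieHom s x

/-- For `h` with vanishing `V`-component, brackets with `h` lie in the line `ℚ·t`. -/
lemma bracket_with_H (h z : ExtE ω₁ b₁) (hv : h.1.2 = 0) :
    ⁅h, z⁆ = (basisPairing b₁ h.1.1 z.1.2) • Et ω₁ b₁ := by
  rw [ExtE.bracket_eq]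
  apply ExtE.ext' <;>
    simp [ExtE.smul_fst, ExtE.smul_snd, Et_c11, Et_c12, Et_c21, Et_c22, hv, map_zero]

/-- Key lemma: α maps elements with zero V₁-component to elements with zero V₂-component. -/
lemma aux_mapsV (hnd₂ : ∀ x : V₂, (∀ v : V₂, ω₂.toFun x v = 0) → x = 0)
    (α : ExtE ω₁ b₁ ≃ₗ⁅ℚ⁆ ExtE ω₂ b₂)
    (h : ExtE ω₁ b₁) (hv : h.1.2 = 0) :
    (α h).1.2 = 0 := by
  by_contra hne
  set v : V₂ := (α h).1.2 with hvdef
  obtain ⟨v₀, hv₀⟩ : ∃ v₀, ω₂.toFun v v₀ ≠ 0 := by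
    by_contra hc; push_neg at hc; exact hne (hnd₂ v hc)
  obtain ⟨j, hj⟩ : ∃ j, b₂.repr v j ≠ 0 := by
    by_contra hc; push_neg at hc
    refine hne ((LinearEquiv.map_eq_zero_iff b₂.repr).mp (Finsupp.ext hc))
  have key : ∀ Y : ExtE ω₂ b₂, ∃ s : ℚ, ⁅α h, Y⁆ = s • α (Et ω₁ b₁) := by
    intro Y
    refine ⟨basisPairing b₁ h.1.1 (α.symm Y).1.2, ?_⟩
    have h1 : α ⁅h, α.symm Y⁆ = ⁅α h, Y⁆ := by
      rw [lieEquiv_map_lie, LieEquiv.apply_symm_apply]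
    rw [← h1, bracket_with_H h _ hv, lieEquiv_map_smul]
  obtain ⟨s₁, hs₁⟩ := key (((0, v₀), (0, 0)) : ExtE ω₂ b₂)
  obtain ⟨s₂, hs₂⟩ := key (((Pi.single j 1, 0), (0, 0)) : ExtE ω₂ b₂)
  erw [ExtE.bracket_eq] at hs₁ hs₂
  have e2t := congrArg (fun z : ExtE ω₂ b₂ => z.2.1) hs₂
  have e2w := congrArg (fun z : ExtE ω₂ b₂ => z.2.2) hs₂
  have e1w := congrArg (fun z : ExtE ω₂ b₂ => z.2.2) hs₁
  simp only [ExtE.smul_snd, Prod.smul_fst, Prod.smul_snd,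
    pair_single, map_zero, LinearMap.zero_apply] at e2t e2w e1w
  have hs₂ne : s₂ ≠ 0 := by
    intro h0; rw [h0] at e2t; simp at e2t; exact hj e2t
  have hcw : (α (Et ω₁ b₁)).2.2 = 0 := by
    rcases smul_eq_zero.mp e2w.symm with h0 | h0
    · exact absurd h0 hs₂ne
    · exact h0
  rw [hcw, smul_zero] at e1w
  exact hv₀ e1w

end Aux16

section Aux16b
variable {V₁ W₁ V₂ W₂ : Type}
    [AddCommGroup V₁] [Module ℚ V₁] [AddCommGroup W₁] [Module ℚ W₁]
    [AddCommGroup V₂] [Module ℚ V₂] [AddCommGroup W₂] [Module ℚ W₂]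
    {n : ℕ} {ω₁ : AltBil V₁ W₁} {ω₂ : AltBil V₂ W₂}
    {b₁ : Module.Basis (Fin n) ℚ V₁} {b₂ : Module.Basis (Fin n) ℚ V₂}

/-- If `V` has an empty basis, every element of `V` is zero. -/
lemma V_trivial (b : Module.Basis (Fin 0) ℚ V₁) (v : V₁) : v = 0 :=
  (LinearEquiv.map_eq_zero_iff b.repr).mp (Finsupp.ext fun i => i.elim0)

/-- If moreover the span condition holds, `W` is trivial. -/
lemma W_trivial (b : Module.Basis (Fin 0) ℚ V₁)
    (hspan : Submodule.span ℚ (Set.range fun p : V₁ × V₁ => ω₁.toFun p.1 p.2) = ⊤)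
    (w : W₁) : w = 0 := by
  have hw : w ∈ Submodule.span ℚ (Set.range fun p : V₁ × V₁ => ω₁.toFun p.1 p.2) := by
    rw [hspan]; trivial
  have hsub : (Set.range fun p : V₁ × V₁ => ω₁.toFun p.1 p.2) ⊆ {0} := by
    rintro _ ⟨p, rfl⟩
    simp [V_trivial b p.1, map_zero]
  have := Submodule.span_mono hsub hw
  simpa using this

/-- `α` maps the generator of `T₁` into `T₂`. -/
lemma aux_Et (hnd₂ : ∀ x : V₂, (∀ v : V₂, ω₂.toFun x v = 0) → x = 0)
    (hspan₂ : Submodule.span ℚ (Set.range fun p : V₂ × V₂ => ω₂.toFun p.1 p.2) = ⊤)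
    (α : ExtE ω₁ b₁ ≃ₗ⁅ℚ⁆ ExtE ω₂ b₂) :
    (α (Et ω₁ b₁)).1.1 = 0 ∧ (α (Et ω₁ b₁)).1.2 = 0 ∧ (α (Et ω₁ b₁)).2.2 = 0 := by
  rcases Nat.eq_zero_or_pos n with hn | hn
  · subst hn
    refine ⟨funext fun i => i.elim0, V_trivial b₂ _, W_trivial b₂ hspan₂ _⟩
  · set i0 : Fin n := ⟨0, hn⟩
    set X : ExtE ω₁ b₁ := ((Pi.single i0 1, 0), (0, 0)) with hX
    set Y : ExtE ω₁ b₁ := ((0, b₁ i0), (0, 0)) with hY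
    have hXY : ⁅X, Y⁆ = Et ω₁ b₁ := by
      rw [ExtE.bracket_eq]
      apply ExtE.ext' <;>
        simp [hX, hY, Et_c11, Et_c12, Et_c21, Et_c22, pair_single, map_zero]
    have hae : α (Et ω₁ b₁) = ⁅α X, α Y⁆ := by rw [← hXY, lieEquiv_map_lie]
    have hXv : (α X).1.2 = 0 := aux_mapsV hnd₂ α X rfl
    rw [hae, ExtE.bracket_eq]
    exact ⟨rfl, rfl, by simp [hXv, map_zero]⟩

/-- Elements with vanishing `U ⊕ V`-component are central. -/
lemma aux_central (x : ExtE ω₂ b₂) (h1 : x.1.1 = 0) (h2 : x.1.2 = 0) (y : ExtE ω₂ b₂) :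
    ⁅y, x⁆ = 0 := by
  rw [ExtE.bracket_eq]
  apply ExtE.ext' <;> simp [h1, h2, map_zero, ExtE.zero_c11, ExtE.zero_c12, ExtE.zero_c21, ExtE.zero_c22]

/-- A central element has vanishing `U`-component. -/
lemma aux_u_eq_zero (h : ExtE ω₁ b₁) (hc : ∀ y : ExtE ω₁ b₁, ⁅h, y⁆ = 0) :
    h.1.1 = 0 := by
  funext j
  have := congrArg (fun z : ExtE ω₁ b₁ => z.2.1) (hc (((0, b₁ j), (0, 0)) : ExtE ω₁ b₁))
  erw [ExtE.bracket_eq] at this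
  simpa [pair_basis, map_zero, ExtE.zero_c21] using this

/-- Transport of centrality along `α.symm`. -/
lemma aux_center_pull (α : ExtE ω₁ b₁ ≃ₗ⁅ℚ⁆ ExtE ω₂ b₂) (h : ExtE ω₁ b₁)
    (hc : ∀ y : ExtE ω₂ b₂, ⁅α h, y⁆ = 0) (y : ExtE ω₁ b₁) : ⁅h, y⁆ = 0 := by
  have h0 : α ⁅h, y⁆ = 0 := by rw [lieEquiv_map_lie, hc (α y)]
  exact α.injective (h0.trans α.toLieHom.map_zero.symm)

/-- scalar multiples of Et. -/
lemma aux_smul_Et (h : ExtE ω₁ b₁) (h11 : h.1.1 = 0) (h12 : h.1.2 = 0) (h22 : h.2.2 = 0) :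
    h = h.2.1 • Et ω₁ b₁ := by
  apply ExtE.ext' <;>
    simp [ExtE.smul_fst, ExtE.smul_snd, Et_c11, Et_c12, Et_c21, Et_c22, h11, h12, h22]

/-- Statement-3 core: if `h ∈ H₁` and `α h ∈ L₂` then `α h = 0`. -/
lemma aux_stmt3 (hnd₂ : ∀ x : V₂, (∀ v : V₂, ω₂.toFun x v = 0) → x = 0)
    (hspan₂ : Submodule.span ℚ (Set.range fun p : V₂ × V₂ => ω₂.toFun p.1 p.2) = ⊤)
    (α : ExtE ω₁ b₁ ≃ₗ⁅ℚ⁆ ExtE ω₂ b₂)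
    (h : ExtE ω₁ b₁) (hv : h.1.2 = 0) (hw : h.2.2 = 0)
    (hu2 : (α h).1.1 = 0) (ht2 : (α h).2.1 = 0) : α h = 0 := by
  have hv2 : (α h).1.2 = 0 := aux_mapsV hnd₂ α h hv
  have hcent2 : ∀ y : ExtE ω₂ b₂, ⁅α h, y⁆ = 0 := by
    intro y
    rw [← lie_skew, aux_central (α h) hu2 hv2 y, neg_zero]
  have hcent1 : ∀ y : ExtE ω₁ b₁, ⁅h, y⁆ = 0 := aux_center_pull α h hcent2
  have hu1 : h.1.1 = 0 := aux_u_eq_zero h hcent1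
  have hEt := aux_Et hnd₂ hspan₂ α
  have : α h = h.2.1 • α (Et ω₁ b₁) := by
    rw [← lieEquiv_map_smul, ← aux_smul_Et h hu1 hv hw]
  refine ExtE.ext' ?_ ?_ ht2 ?_ <;> rw [this] <;>
    simp [ExtE.smul_fst, ExtE.smul_snd, hEt.1, hEt.2.1, hEt.2.2,
      ExtE.zero_c11, ExtE.zero_c12, ExtE.zero_c21, ExtE.zero_c22]
end Aux16b

section Aux16c
variable {V W : Type} [AddCommGroup V] [Module ℚ V] [AddCommGroup W] [Module ℚ W] {n : ℕ}

/-- The tautological linear equivalence between `ExtE` and the underlying product. -/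
def extEProd (ω : AltBil V W) (b : Module.Basis (Fin n) ℚ V) :
    ExtE ω b ≃ₗ[ℚ] ((Fin n → ℚ) × V) × (ℚ × W) where
  toFun := ExtE.toProd
  invFun x := x
  map_add' _ _ := rfl
  map_smul' _ _ := rfl
  left_inv _ := rfl
  right_inv _ := rfl

instance extE_fd (ω : AltBil V W) (b : Module.Basis (Fin n) ℚ V)
    [FiniteDimensional ℚ V] [FiniteDimensional ℚ W] :
    FiniteDimensional ℚ (ExtE ω b) :=
  Module.Finite.equiv (extEProd ω b).symm

lemma finrank_extE (ω : AltBil V W) (b : Module.Basis (Fin n) ℚ V)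
    [FiniteDimensional ℚ V] [FiniteDimensional ℚ W] :
    Module.finrank ℚ (ExtE ω b) = n + n + 1 + Module.finrank ℚ W := by
  have hV : Module.finrank ℚ V = n := by
    rw [Module.finrank_eq_card_basis b, Fintype.card_fin]
  rw [(extEProd ω b).finrank_eq]
  rw [Module.finrank_prod, Module.finrank_prod, Module.finrank_prod,
    Module.finrank_fin_fun, Module.finrank_self, hV]
  ring

lemma projVW_surj (ω : AltBil V W) (b : Module.Basis (Fin n) ℚ V) :
    Function.Surjective (ExtE.projVW ω b) :=
  fun p => ⟨((0, p.1), (0, p.2)), rfl⟩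

lemma projUT_surj (ω : AltBil V W) (b : Module.Basis (Fin n) ℚ V) :
    Function.Surjective (ExtE.projUT ω b) :=
  fun p => ⟨((p.1, 0), (p.2, 0)), rfl⟩

lemma finrank_ker_projVW (ω : AltBil V W) (b : Module.Basis (Fin n) ℚ V)
    [FiniteDimensional ℚ V] [FiniteDimensional ℚ W] :
    Module.finrank ℚ (LinearMap.ker (ExtE.projVW ω b)) = n + 1 := by
  have hV : Module.finrank ℚ V = n := by
    rw [Module.finrank_eq_card_basis b, Fintype.card_fin]
  have h1 := (ExtE.projVW ω b).finrank_range_add_finrank_ker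
  rw [LinearMap.range_eq_top.mpr (projVW_surj ω b), finrank_top, finrank_extE,
    Module.finrank_prod, hV] at h1
  omega

lemma finrank_ker_projUT (ω : AltBil V W) (b : Module.Basis (Fin n) ℚ V)
    [FiniteDimensional ℚ V] [FiniteDimensional ℚ W] :
    Module.finrank ℚ (LinearMap.ker (ExtE.projUT ω b)) = n + Module.finrank ℚ W := by
  have h1 := (ExtE.projUT ω b).finrank_range_add_finrank_ker
  rw [LinearMap.range_eq_top.mpr (projUT_surj ω b), finrank_top, finrank_extE,
    Module.finrank_prod, Module.finrank_fin_fun, Module.finrank_self] at h1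
  omega

/-- The inclusion `L → E(L)` as a Lie algebra homomorphism. -/
def iotaL (ω : AltBil V W) (b : Module.Basis (Fin n) ℚ V) : Hsbg ω →ₗ⁅ℚ⁆ ExtE ω b where
  toFun x := ((0, x.1), (0, x.2))
  map_add' x y := by
    apply ExtE.ext' <;>
      simp [ExtE.add_fst, ExtE.add_snd, Hsbg.add_fst, Hsbg.add_snd]
    exacts [(add_zero 0).symm, rfl, (add_zero 0).symm, rfl]
  map_smul' s x := by
    apply ExtE.ext' <;>
      simp [ExtE.smul_fst, ExtE.smul_snd, Hsbg.smul_fst, Hsbg.smul_snd]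
    exacts [(smul_zero s).symm, rfl, (smul_zero s).symm, rfl]
  map_lie' {x y} := by
    erw [ExtE.bracket_eq]
    apply ExtE.ext' <;> simp [Hsbg.bracket_def, map_zero]

/-- The projection `E(L) → L` as a Lie algebra homomorphism. -/
def piL (ω : AltBil V W) (b : Module.Basis (Fin n) ℚ V) : ExtE ω b →ₗ⁅ℚ⁆ Hsbg ω where
  toFun x := (x.1.2, x.2.2)
  map_add' _ _ := rfl
  map_smul' _ _ := rfl
  map_lie' {x y} := rfl

lemma finrank_Hsbg (ω : AltBil V W) (b : Module.Basis (Fin n) ℚ V)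
    [FiniteDimensional ℚ V] [FiniteDimensional ℚ W] :
    Module.finrank ℚ (Hsbg ω) = n + Module.finrank ℚ W := by
  have hV : Module.finrank ℚ V = n := by
    rw [Module.finrank_eq_card_basis b, Fintype.card_fin]
  have e : Hsbg ω ≃ₗ[ℚ] V × W :=
    { toFun := fun x => x, invFun := fun x => x, map_add' := fun _ _ => rfl,
      map_smul' := fun _ _ => rfl, left_inv := fun _ => rfl, right_inv := fun _ => rfl }
  rw [e.finrank_eq, Module.finrank_prod, hV]

instance Hsbg_fd (ω : AltBil V W) [FiniteDimensional ℚ V] [FiniteDimensional ℚ W] :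
    FiniteDimensional ℚ (Hsbg ω) :=
  inferInstanceAs (FiniteDimensional ℚ (V × W))

end Aux16c

section Aux16d
variable {V W : Type} [AddCommGroup V] [Module ℚ V] [AddCommGroup W] [Module ℚ W] {n : ℕ}

lemma mem_ker_projVW (ω : AltBil V W) (b : Module.Basis (Fin n) ℚ V) (x : ExtE ω b) :
    x ∈ LinearMap.ker (ExtE.projVW ω b) ↔ x.1.2 = 0 ∧ x.2.2 = 0 := by
  simp [ExtE.projVW, LinearMap.mem_ker, LinearMap.coe_mk, Prod.ext_iff, ExtE.toProd_def]

lemma mem_ker_projUT (ω : AltBil V W) (b : Module.Basis (Fin n) ℚ V) (x : ExtE ω b) :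
    x ∈ LinearMap.ker (ExtE.projUT ω b) ↔ x.1.1 = 0 ∧ x.2.1 = 0 := by
  simp [ExtE.projUT, LinearMap.mem_ker, LinearMap.coe_mk, Prod.ext_iff, ExtE.toProd_def]

lemma mem_ker_projUVW (ω : AltBil V W) (b : Module.Basis (Fin n) ℚ V) (x : ExtE ω b) :
    x ∈ LinearMap.ker (ExtE.projUVW ω b) ↔ x.1.1 = 0 ∧ x.1.2 = 0 ∧ x.2.2 = 0 := by
  simp [ExtE.projUVW, LinearMap.mem_ker, LinearMap.coe_mk, Prod.ext_iff, ExtE.toProd_def,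
    and_assoc]

lemma mem_ker_projV (ω : AltBil V W) (b : Module.Basis (Fin n) ℚ V) (x : ExtE ω b) :
    x ∈ LinearMap.ker (ExtE.projV ω b) ↔ x.1.2 = 0 := by
  simp [ExtE.projV, LinearMap.mem_ker, LinearMap.coe_mk, ExtE.toProd_def]

end Aux16d

/-- an isomorphism `α : E(L₁) → E(L₂)` maps `H₁ = U₁ ⊕ T₁` into
`U₂ ⊕ Z(E(L₂))`, with `α(H₁) ∩ Z(E(L₂)) = T₂`, `α(H₁) ∩ L₂ = 0`,
`E(L₂) = α(H₁) ⊕ L₂`, and consequently `L₁ ≅ L₂`. -/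
theorem extE_iso_transfers
    {V₁ W₁ V₂ W₂ : Type}
    [AddCommGroup V₁] [Module ℚ V₁] [AddCommGroup W₁] [Module ℚ W₁]
    [AddCommGroup V₂] [Module ℚ V₂] [AddCommGroup W₂] [Module ℚ W₂]
    [FiniteDimensional ℚ V₁] [FiniteDimensional ℚ W₁]
    [FiniteDimensional ℚ V₂] [FiniteDimensional ℚ W₂]
    {n : ℕ} (ω₁ : AltBil V₁ W₁) (ω₂ : AltBil V₂ W₂)
    (b₁ : Module.Basis (Fin n) ℚ V₁) (b₂ : Module.Basis (Fin n) ℚ V₂)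
    (hm : Module.finrank ℚ W₁ = Module.finrank ℚ W₂)
    (hnd₁ : ∀ x : V₁, (∀ v : V₁, ω₁.toFun x v = 0) → x = 0)
    (hspan₁ : Submodule.span ℚ (Set.range fun p : V₁ × V₁ => ω₁.toFun p.1 p.2) = ⊤)
    (hnd₂ : ∀ x : V₂, (∀ v : V₂, ω₂.toFun x v = 0) → x = 0)
    (hspan₂ : Submodule.span ℚ (Set.range fun p : V₂ × V₂ => ω₂.toFun p.1 p.2) = ⊤)
    (α : ExtE ω₁ b₁ ≃ₗ⁅ℚ⁆ ExtE ω₂ b₂) :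
    Submodule.map α.toLieHom.toLinearMap (LinearMap.ker (ExtE.projVW ω₁ b₁))
        ≤ LinearMap.ker (ExtE.projV ω₂ b₂) ∧
    Submodule.map α.toLieHom.toLinearMap (LinearMap.ker (ExtE.projVW ω₁ b₁))
        ⊓ (LieAlgebra.center ℚ (ExtE ω₂ b₂)).toSubmodule
        = LinearMap.ker (ExtE.projUVW ω₂ b₂) ∧
    Submodule.map α.toLieHom.toLinearMap (LinearMap.ker (ExtE.projVW ω₁ b₁))
        ⊓ LinearMap.ker (ExtE.projUT ω₂ b₂) = ⊥ ∧
    IsCompl (Submodule.map α.toLieHom.toLinearMap (LinearMap.ker (ExtE.projVW ω₁ b₁)))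
        (LinearMap.ker (ExtE.projUT ω₂ b₂)) ∧
    Nonempty (Hsbg ω₁ ≃ₗ⁅ℚ⁆ Hsbg ω₂) := by
  have hEt2 := aux_Et hnd₂ hspan₂ α
  have hEt1 := aux_Et hnd₁ hspan₁ α.symm
  -- Part 1
  have part1 : Submodule.map α.toLieHom.toLinearMap (LinearMap.ker (ExtE.projVW ω₁ b₁))
      ≤ LinearMap.ker (ExtE.projV ω₂ b₂) := by
    intro x hx
    obtain ⟨h, hh, hxeq⟩ := Submodule.mem_map.mp hx
    have hxeq' : α h = x := hxeq
    rw [mem_ker_projVW] at hh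
    rw [mem_ker_projV, ← hxeq']
    exact aux_mapsV hnd₂ α h hh.1
  -- Part 2
  have part2 : Submodule.map α.toLieHom.toLinearMap (LinearMap.ker (ExtE.projVW ω₁ b₁))
      ⊓ (LieAlgebra.center ℚ (ExtE ω₂ b₂)).toSubmodule
      = LinearMap.ker (ExtE.projUVW ω₂ b₂) := by
    apply le_antisymm
    · intro x hx
      obtain ⟨hx1, hx2⟩ := Submodule.mem_inf.mp hx
      obtain ⟨h, hh, hxeq⟩ := Submodule.mem_map.mp hx1
      have hxeq' : α h = x := hxeq
      rw [mem_ker_projVW] at hh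
      rw [LieSubmodule.mem_toSubmodule, LieModule.mem_maxTrivSubmodule] at hx2
      have hcent2 : ∀ y : ExtE ω₂ b₂, ⁅α h, y⁆ = 0 := by
        intro y; rw [← lie_skew, hxeq', hx2 y, neg_zero]
      have hcent1 : ∀ y : ExtE ω₁ b₁, ⁅h, y⁆ = 0 := aux_center_pull α h hcent2
      have hu1 : h.1.1 = 0 := aux_u_eq_zero h hcent1
      have heq : α h = h.2.1 • α (Et ω₁ b₁) := by
        rw [← lieEquiv_map_smul, ← aux_smul_Et h hu1 hh.1 hh.2]
      rw [mem_ker_projUVW, ← hxeq']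
      refine ⟨?_, ?_, ?_⟩ <;> rw [heq] <;>
        simp [ExtE.smul_fst, ExtE.smul_snd, hEt2.1, hEt2.2.1, hEt2.2.2]
    · intro x hx
      rw [mem_ker_projUVW] at hx
      obtain ⟨h1, h2, h3⟩ := hx
      refine Submodule.mem_inf.mpr ⟨?_, ?_⟩
      · refine Submodule.mem_map.mpr ⟨x.2.1 • α.symm (Et ω₂ b₂), ?_, ?_⟩
        · rw [mem_ker_projVW]
          constructor
          · rw [ExtE.smul_fst]; simp [hEt1.2.1]
          · rw [ExtE.smul_snd]; simp [hEt1.2.2]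
        · show α (x.2.1 • α.symm (Et ω₂ b₂)) = x
          rw [lieEquiv_map_smul, LieEquiv.apply_symm_apply]
          exact (aux_smul_Et x h1 h2 h3).symm
      · rw [LieSubmodule.mem_toSubmodule, LieModule.mem_maxTrivSubmodule]
        exact fun y => aux_central x h1 h2 y
  -- Part 3
  have part3 : Submodule.map α.toLieHom.toLinearMap (LinearMap.ker (ExtE.projVW ω₁ b₁))
      ⊓ LinearMap.ker (ExtE.projUT ω₂ b₂) = ⊥ := by
    rw [eq_bot_iff]
    intro x hx
    obtain ⟨hx1, hx2⟩ := Submodule.mem_inf.mp hx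
    obtain ⟨h, hh, hxeq⟩ := Submodule.mem_map.mp hx1
    have hxeq' : α h = x := hxeq
    rw [mem_ker_projVW] at hh
    rw [mem_ker_projUT, ← hxeq'] at hx2
    have h0 := aux_stmt3 hnd₂ hspan₂ α h hh.1 hh.2 hx2.1 hx2.2
    rw [Submodule.mem_bot, ← hxeq']
    exact h0
  -- Part 4
  have hdisj : Disjoint (Submodule.map α.toLieHom.toLinearMap
      (LinearMap.ker (ExtE.projVW ω₁ b₁))) (LinearMap.ker (ExtE.projUT ω₂ b₂)) :=
    disjoint_iff.mpr part3
  have hmap : Module.finrank ℚ (Submodule.map α.toLieHom.toLinearMap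
      (LinearMap.ker (ExtE.projVW ω₁ b₁)))
      = Module.finrank ℚ (LinearMap.ker (ExtE.projVW ω₁ b₁)) := by
    exact LinearEquiv.finrank_map_eq α.toLinearEquiv _
  have hdim : Module.finrank ℚ (Submodule.map α.toLieHom.toLinearMap
      (LinearMap.ker (ExtE.projVW ω₁ b₁)))
      + Module.finrank ℚ (LinearMap.ker (ExtE.projUT ω₂ b₂))
      = Module.finrank ℚ (ExtE ω₂ b₂) := by
    rw [hmap, finrank_ker_projVW, finrank_ker_projUT, finrank_extE]
    omega
  have part4 : IsCompl (Submodule.map α.toLieHom.toLinearMap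
      (LinearMap.ker (ExtE.projVW ω₁ b₁))) (LinearMap.ker (ExtE.projUT ω₂ b₂)) :=
    ⟨hdisj, codisjoint_iff.mpr (Submodule.eq_top_of_disjoint _ _ hdim.ge hdisj)⟩
  -- Part 5
  have part5 : Nonempty (Hsbg ω₁ ≃ₗ⁅ℚ⁆ Hsbg ω₂) := by
    let ψ : Hsbg ω₁ →ₗ⁅ℚ⁆ Hsbg ω₂ := (piL ω₂ b₂).comp (α.toLieHom.comp (iotaL ω₁ b₁))
    have hker : ∀ z : Hsbg ω₁, ψ z = 0 → z = 0 := by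
      intro z hz
      have h1 : (α (iotaL ω₁ b₁ z)).1.2 = 0 := congrArg Prod.fst hz
      have h2 : (α (iotaL ω₁ b₁ z)).2.2 = 0 := congrArg Prod.snd hz
      have h3 : (α.symm (α (iotaL ω₁ b₁ z))).1.1 = 0 := by
        rw [LieEquiv.symm_apply_apply]; rfl
      have h4 : (α.symm (α (iotaL ω₁ b₁ z))).2.1 = 0 := by
        rw [LieEquiv.symm_apply_apply]; rfl
      have h0 : α.symm (α (iotaL ω₁ b₁ z)) = 0 :=
        aux_stmt3 hnd₁ hspan₁ α.symm (α (iotaL ω₁ b₁ z)) h1 h2 h3 h4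
      rw [LieEquiv.symm_apply_apply] at h0
      have h5 := congrArg (fun e : ExtE ω₁ b₁ => ((e.1.2, e.2.2) : V₁ × W₁)) h0
      simp only [ExtE.zero_c12, ExtE.zero_c22] at h5
      exact Prod.ext (congrArg Prod.fst h5) (congrArg Prod.snd h5)
    have hfr : Module.finrank ℚ (Hsbg ω₁) = Module.finrank ℚ (Hsbg ω₂) := by
      rw [finrank_Hsbg ω₁ b₁, finrank_Hsbg ω₂ b₂, hm]
    have hinj : Function.Injective ψ.toLinearMap :=
      (injective_iff_map_eq_zero ψ.toLinearMap).mpr hker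
    have hsurj : Function.Surjective ψ.toLinearMap :=
      (LinearMap.injective_iff_surjective_of_finrank_eq_finrank hfr).mp hinj
    let E := Equiv.ofBijective (fun z => ψ z) ⟨hinj, hsurj⟩
    exact ⟨{ toLieHom := ψ, invFun := E.symm,
             left_inv := fun x => E.left_inv x, right_inv := fun x => E.right_inv x }⟩
  exact ⟨part1, part2, part3, part4, part5⟩
end

section
/- Let λ = φ ⊕ ψ : L₁ → L₂ be an isomorphism of Lie algebras between L₁ = V₁ ⊕ W₁ and L₂ = V₂ ⊕ W₂ (so ω₂(φv,φv') = ψ(ω₁(v,v'))). Let F ∈ GLₙ(ℚ) be the matrix of φ in the chosen bases, set G = (F⁻¹)ᵗ, let γ : U₁ → U₂ be the linear map with matrix G in the bases {uⱼ⁽ⁱ⁾}, and let τ : T₁ → T₂ send t⁽¹⁾ to t⁽²⁾. Then γ ⊕ φ ⊕ τ ⊕ ψ : E(L₁) → E(L₂) is a Lie algebra isomorphism. -/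
variable {V W : Type} [AddCommGroup V] [Module ℚ V] [AddCommGroup W] [Module ℚ W]

/-- an isomorphism `λ = φ ⊕ ψ : L₁ → L₂` extends to an isomorphism
`γ ⊕ φ ⊕ τ ⊕ ψ : E(L₁) → E(L₂)`, where `γ` has matrix `G = (F⁻¹)ᵗ`, `F` being the
matrix of `φ`, and `τ` sends `t⁽¹⁾ ↦ t⁽²⁾`. -/
theorem extE_iso_of_iso
    {V₁ W₁ V₂ W₂ : Type}
    [AddCommGroup V₁] [Module ℚ V₁] [AddCommGroup W₁] [Module ℚ W₁]
    [AddCommGroup V₂] [Module ℚ V₂] [AddCommGroup W₂] [Module ℚ W₂]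
    {n : ℕ} (ω₁ : AltBil V₁ W₁) (ω₂ : AltBil V₂ W₂)
    (b₁ : Module.Basis (Fin n) ℚ V₁) (b₂ : Module.Basis (Fin n) ℚ V₂)
    (φ : V₁ ≃ₗ[ℚ] V₂) (ψ : W₁ ≃ₗ[ℚ] W₂)
    (hcompat : ∀ v₁ v₂ : V₁, ω₂.toFun (φ v₁) (φ v₂) = ψ (ω₁.toFun v₁ v₂)) :
    ∃ e : ExtE ω₁ b₁ ≃ₗ⁅ℚ⁆ ExtE ω₂ b₂,
      ∀ x : ExtE ω₁ b₁,
        (e x).toProd =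
          ((Matrix.toLin' (Matrix.transpose (LinearMap.toMatrix b₁ b₂ φ.toLinearMap)⁻¹) x.toProd.1.1,
              φ x.toProd.1.2),
            (x.toProd.2.1, ψ x.toProd.2.2)) := by
  classical
  set F := LinearMap.toMatrix b₁ b₂ φ.toLinearMap with hF
  set G := Matrix.transpose F⁻¹ with hG
  -- F is invertible
  have hBF : (LinearMap.toMatrix b₂ b₁ φ.symm.toLinearMap) * F = 1 := by
    rw [hF, ← LinearMap.toMatrix_comp b₁ b₂ b₁]
    simp [LinearMap.toMatrix_id]
  have hinv : F⁻¹ = LinearMap.toMatrix b₂ b₁ φ.symm.toLinearMap :=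
    Matrix.inv_eq_left_inv hBF
  have h1 : F⁻¹ * F = 1 := by rw [hinv]; exact hBF
  have h2 : F * F⁻¹ = 1 := mul_eq_one_comm.mp h1
  -- γ as a linear equivalence
  let γe : (Fin n → ℚ) ≃ₗ[ℚ] (Fin n → ℚ) :=
    LinearEquiv.ofLinear (Matrix.toLin' G) (Matrix.toLin' F.transpose)
      (by
        rw [← Matrix.toLin'_mul, hG, ← Matrix.transpose_mul, h2, Matrix.transpose_one,
          Matrix.toLin'_one])
      (by
        rw [← Matrix.toLin'_mul, hG, ← Matrix.transpose_mul, h1, Matrix.transpose_one,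
          Matrix.toLin'_one])
  -- the key pairing compatibility
  have key : ∀ (u : Fin n → ℚ) (v : V₁),
      basisPairing b₂ (γe u) (φ v) = basisPairing b₁ u v := by
    intro u v
    have hrep : Matrix.mulVec F (b₁.repr v) = b₂.repr (φ v) :=
      LinearMap.toMatrix_mulVec_repr b₁ b₂ φ.toLinearMap v
    have hγ : (γe u : Fin n → ℚ) = Matrix.mulVec G u := Matrix.toLin'_apply G u
    have hbp : ∀ (x : Fin n → ℚ) (y : V₂),
        basisPairing b₂ x y = dotProduct x (b₂.repr y) := fun x y => rfl
    have hbp₁ : ∀ (x : Fin n → ℚ) (y : V₁),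
        basisPairing b₁ x y = dotProduct x (b₁.repr y) := fun x y => rfl
    rw [hbp, hbp₁, hγ, ← hrep, dotProduct_comm, Matrix.dotProduct_mulVec,
      ← Matrix.mulVec_transpose, hG, Matrix.transpose_transpose,
      Matrix.mulVec_mulVec, h1, Matrix.one_mulVec, dotProduct_comm]
  -- the underlying linear equivalence of E(L₁) → E(L₂)
  let eLin : ExtE ω₁ b₁ ≃ₗ[ℚ] ExtE ω₂ b₂ :=
    LinearEquiv.prodCongr (LinearEquiv.prodCongr γe φ) (LinearEquiv.prodCongr (LinearEquiv.refl ℚ ℚ) ψ)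
  have hml : ∀ x y : ExtE ω₁ b₁,
      eLin ⁅x, y⁆ = ⁅eLin x, eLin y⁆ := ?_
  · exact ⟨⟨⟨eLin.toLinearMap, hml _ _⟩, eLin.symm, eLin.left_inv, eLin.right_inv⟩,
      fun x => rfl⟩
  have hx : ∀ z : ExtE ω₁ b₁,
      eLin z = (((γe z.toProd.1.1, φ z.toProd.1.2), (z.toProd.2.1, ψ z.toProd.2.2)) :
        ((Fin n → ℚ) × V₂) × (ℚ × W₂)) := fun z => rfl
  intro x y
  erw [Hsbg.bracket_def, Hsbg.bracket_def, hx, hx, hx]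
  refine Prod.ext (Prod.ext ?_ ?_) (Prod.ext ?_ ?_)
  · show γe 0 = 0; simp
  · show φ 0 = 0; simp
  · show basisPairing b₁ x.toProd.1.1 y.toProd.1.2 - basisPairing b₁ y.toProd.1.1 x.toProd.1.2
        = basisPairing b₂ (γe x.toProd.1.1) (φ y.toProd.1.2)
          - basisPairing b₂ (γe y.toProd.1.1) (φ x.toProd.1.2)
    rw [key, key]
  · exact (hcompat _ _).symm
end
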